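/- There exists a 2-dimensional configuration p of 6 points in general position in ℝ² such that the bar framework (K_{3,3}, p) on the complete bipartite graph K_{3,3} is universally rigid; in particular, there is a universally rigid 2-dimensional bar framework in general position in ℝ² whose graph contains no triangle. -/

import Mathlib

open Matrix

/-- A configuration `p` in `ℝ^r` is `r`-dimensional if its points affinely span `ℝ^r`. -/
def IsRDimensional {V : Type*} {r : ℕ} (p : V → EuclideanSpace ℝ (Fin r)) : Prop :=
  affineSpan ℝ (Set.range p) = ⊤

/-- A configuration is in general position in `ℝ^r` if every `r+1` of its points are
affinely independent. -/
def InGeneralPosition {V : Type*} [DecidableEq V] {r : ℕ}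
    (p : V → EuclideanSpace ℝ (Fin r)) : Prop :=
  ∀ s : Finset V, s.card = r + 1 → AffineIndependent ℝ (fun i : s => p i)

/-- `(G, q)` is equivalent to `(G, p)`: corresponding edge lengths agree. -/
def FrameworkEquiv {V : Type*} {r r' : ℕ} (G : SimpleGraph V)
    (p : V → EuclideanSpace ℝ (Fin r)) (q : V → EuclideanSpace ℝ (Fin r')) : Prop :=
  ∀ i j : V, G.Adj i j → ‖q i - q j‖ = ‖p i - p j‖

/-- Two configurations are congruent: all pairwise distances agree. -/
def ConfigCongruent {V : Type*} {r r' : ℕ} (p : V → EuclideanSpace ℝ (Fin r))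
    (q : V → EuclideanSpace ℝ (Fin r')) : Prop :=
  ∀ i j : V, ‖q i - q j‖ = ‖p i - p j‖

/-- `(G, p)` is universally rigid: for every `1 ≤ r' ≤ n - 1` (where `n` is the number of
nodes), every `r'`-dimensional framework `(G, q)` equivalent to `(G, p)` is congruent to it. -/
def UniversallyRigid {V : Type*} [Fintype V] {r : ℕ} (G : SimpleGraph V)
    (p : V → EuclideanSpace ℝ (Fin r)) : Prop :=
  ∀ r' : ℕ, 1 ≤ r' → r' ≤ Fintype.card V - 1 → ∀ q : V → EuclideanSpace ℝ (Fin r'),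
    IsRDimensional q → FrameworkEquiv G p q → ConfigCongruent p q

/-!
The six points are an affine image of the regular hexagon `A₀B₀A₁B₁A₂B₂`. Weight `1` on the
hexagon edges and `-1/2` on the long diagonals is an equilibrium stress whose energy is a sum of
squares of three linear forms. An equivalent framework in any dimension has the same edge lengths,
hence the same energy `0`, so the forms vanish on it: it is an affine image of the hexagon. Its
linear part preserves the lengths of the edges `A₀B₀`, `B₀A₁`, `A₁B₁`, with directions `u`, `w`,
`w - u`, which determine the Gram matrix of `(u, w)`; hence it preserves all distances.
-/

theorem affineIndependent_iff_not_collinear_of_card_eq_three {ι P V : Type*} [AddCommGroup V]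
    [Module ℝ V] [AddTorsor V P] [Fintype ι] (hι : Fintype.card ι = 3) (p : ι → P) :
    AffineIndependent ℝ p ↔ ¬Collinear ℝ (Set.range p) := by
  rw [collinear_iff_finrank_le_one, affineIndependent_iff_not_finrank_vectorSpan_le ℝ p hι]

theorem InGeneralPosition.isRDimensional {V : Type*} [Fintype V] [DecidableEq V] {r : ℕ}
    {p : V → EuclideanSpace ℝ (Fin r)} (hp : InGeneralPosition p) (hV : r + 1 ≤ Fintype.card V) :
    IsRDimensional p := by
  obtain ⟨s, -, hs⟩ := Finset.exists_subset_card_eq hV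
  have hspan : affineSpan ℝ (Set.range fun i : s => p i) = ⊤ :=
    (hp s hs).affineSpan_eq_top_iff_card_eq_finrank_add_one.mpr (by simpa using hs)
  exact top_unique (hspan ▸ affineSpan_mono ℝ (Set.range_comp_subset_range _ p))

def doubleSignedArea (a b c : EuclideanSpace ℝ (Fin 2)) : ℝ :=
  (b 0 - a 0) * (c 1 - a 1) - (b 1 - a 1) * (c 0 - a 0)

theorem not_collinear_of_doubleSignedArea_ne_zero {a b c : EuclideanSpace ℝ (Fin 2)}
    (h : doubleSignedArea a b c ≠ 0) : ¬Collinear ℝ {a, b, c} := by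
  rw [collinear_iff_of_mem (Set.mem_insert a _)]
  rintro ⟨v, hv⟩
  obtain ⟨s, rfl⟩ := hv b (by simp)
  obtain ⟨t, rfl⟩ := hv c (by simp)
  apply h
  simp only [doubleSignedArea, vadd_eq_add, PiLp.add_apply, PiLp.smul_apply, smul_eq_mul]
  ring

theorem inGeneralPosition_of_doubleSignedArea_ne_zero {V : Type*} [DecidableEq V]
    {p : V → EuclideanSpace ℝ (Fin 2)}
    (h : ∀ x y z, x ≠ y → x ≠ z → y ≠ z → doubleSignedArea (p x) (p y) (p z) ≠ 0) :
    InGeneralPosition p := by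
  intro s hs
  obtain ⟨x, y, z, hxy, hxz, hyz, rfl⟩ := Finset.card_eq_three.mp hs
  have hrange : Set.range (fun i : ({x, y, z} : Finset V) => p i) = {p x, p y, p z} := by
    ext; simp [eq_comm]
  rw [affineIndependent_iff_not_collinear_of_card_eq_three (by simpa using hs), hrange]
  exact not_collinear_of_doubleSignedArea_ne_zero (h x y z hxy hxz hyz)

theorem norm_smul_add_smul_eq_of_norm_eq {E F : Type*} [NormedAddCommGroup E]
    [InnerProductSpace ℝ E] [NormedAddCommGroup F] [InnerProductSpace ℝ F] {u w : E} {u' w' : F}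
    (hu : ‖u'‖ = ‖u‖) (hw : ‖w'‖ = ‖w‖) (hwu : ‖w' - u'‖ = ‖w - u‖) (m n : ℝ) :
    ‖m • u' + n • w'‖ = ‖m • u + n • w‖ := by
  have hinner : inner ℝ u' w' = inner ℝ u w := by
    rw [← real_inner_comm u', ← real_inner_comm u,
      real_inner_eq_norm_mul_self_add_norm_mul_self_sub_norm_sub_mul_self_div_two,
      real_inner_eq_norm_mul_self_add_norm_mul_self_sub_norm_sub_mul_self_div_two, hu, hw, hwu]
  rw [← sq_eq_sq₀ (norm_nonneg _) (norm_nonneg _), norm_add_sq_real, norm_add_sq_real]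
  simp only [norm_smul, mul_pow, real_inner_smul_left, real_inner_smul_right, hu, hw, hinner]

noncomputable def bipartiteEnergy {α β : Type*} [Fintype α] [Fintype β] {r : ℕ}
    (ω : α → β → ℝ) (x : α ⊕ β → EuclideanSpace ℝ (Fin r)) : ℝ :=
  ∑ i, ∑ j, ω i j * ‖x (Sum.inl i) - x (Sum.inr j)‖ ^ 2

theorem bipartiteEnergy_eq_of_frameworkEquiv {α β : Type*} [Fintype α] [Fintype β] {r r' : ℕ}
    (ω : α → β → ℝ) {p : α ⊕ β → EuclideanSpace ℝ (Fin r)}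
    {q : α ⊕ β → EuclideanSpace ℝ (Fin r')}
    (h : FrameworkEquiv (completeBipartiteGraph α β) p q) :
    bipartiteEnergy ω q = bipartiteEnergy ω p := by
  simp only [bipartiteEnergy, h _ _ (by simp : (completeBipartiteGraph α β).Adj (.inl _) (.inr _))]

/-- The image of the regular hexagon of radius `2` under `(x, y) ↦ (x, y / √3)`, with vertices
`A₀ B₀ A₁ B₁ A₂ B₂` in cyclic order, where `Aᵢ = hexagon (.inl i)` and `Bᵢ = hexagon (.inr i)`. -/
noncomputable def hexagon : Fin 3 ⊕ Fin 3 → EuclideanSpace ℝ (Fin 2) :=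
  Sum.elim ![!₂[2, 0], !₂[-1, 1], !₂[-1, -1]] ![!₂[1, 1], !₂[-2, 0], !₂[1, -1]]

/-- `Bᵢ₊₁` is the vertex opposite to `Aᵢ`. -/
noncomputable def hexagonStress (i j : Fin 3) : ℝ := if j = i + 1 then -1 / 2 else 1

/-- The three forms are the alternating form and the cosine and sine parts of the second Fourier
mode on the hexagon `A₀B₀A₁B₁A₂B₂`; they are orthogonal with squared lengths `6`, `12`, `4`, and
the stress matrix is `3` times the orthogonal projection onto their span. -/
theorem bipartiteEnergy_hexagonStress {r : ℕ} (x : Fin 3 ⊕ Fin 3 → EuclideanSpace ℝ (Fin r)) :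
    bipartiteEnergy hexagonStress x =
      1 / 2 * ‖x (.inl 0) - x (.inr 0) + x (.inl 1) - x (.inr 1) + x (.inl 2) - x (.inr 2)‖ ^ 2 +
      1 / 4 * ‖2 • x (.inl 0) - x (.inr 0) - x (.inl 1) + 2 • x (.inr 1) - x (.inl 2)
        - x (.inr 2)‖ ^ 2 +
      3 / 4 * ‖x (.inr 0) - x (.inl 1) + x (.inl 2) - x (.inr 2)‖ ^ 2 := by
  simp only [bipartiteEnergy, Fin.sum_univ_three, EuclideanSpace.real_norm_sq_eq, Finset.mul_sum,
    ← Finset.sum_add_distrib]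
  refine Finset.sum_congr rfl fun k _ => ?_
  simp only [hexagonStress, Fin.isValue, Fin.reduceAdd, Fin.reduceEq, zero_add, zero_ne_one,
    one_ne_zero, ↓reduceIte, one_mul, one_div, PiLp.sub_apply, PiLp.add_apply, PiLp.smul_apply,
    nsmul_eq_mul, Nat.cast_ofNat]
  ring

theorem bipartiteEnergy_hexagonStress_hexagon : bipartiteEnergy hexagonStress hexagon = 0 := by
  simp only [bipartiteEnergy, hexagonStress, hexagon, Fin.sum_univ_three, Fin.sum_univ_two,
    EuclideanSpace.real_norm_sq_eq, PiLp.sub_apply, Sum.elim_inl, Sum.elim_inr, Fin.isValue,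
    cons_val_zero, cons_val_one, cons_val, Fin.reduceEq, Fin.reduceAdd, ↓reduceIte]
  norm_num

/-- The coordinates of `hexagon v - B₀` in the frame `(A₀ - B₀, B₀ - A₁)`. -/
def hexagonFrame : Fin 3 ⊕ Fin 3 → ℝ × ℝ :=
  Sum.elim ![(1, 0), (0, -1), (2, -2)] ![(0, 0), (1, -2), (2, -1)]

theorem sub_eq_hexagonFrame_of_frameworkEquiv {r : ℕ}
    {q : Fin 3 ⊕ Fin 3 → EuclideanSpace ℝ (Fin r)}
    (h : FrameworkEquiv (completeBipartiteGraph (Fin 3) (Fin 3)) hexagon q) (i j : Fin 3 ⊕ Fin 3) :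
    q i - q j = ((hexagonFrame i).1 - (hexagonFrame j).1) • (q (.inl 0) - q (.inr 0)) +
      ((hexagonFrame i).2 - (hexagonFrame j).2) • (q (.inr 0) - q (.inl 1)) := by
  have henergy := bipartiteEnergy_hexagonStress q
  rw [bipartiteEnergy_eq_of_frameworkEquiv _ h, bipartiteEnergy_hexagonStress_hexagon] at henergy
  have hsq (a b c : ℝ) (habc : 0 = 1 / 2 * a ^ 2 + 1 / 4 * b ^ 2 + 3 / 4 * c ^ 2) :
      a = 0 ∧ b = 0 ∧ c = 0 := by
    refine ⟨?_, ?_, ?_⟩ <;> nlinarith [sq_nonneg a, sq_nonneg b, sq_nonneg c]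
  obtain ⟨h1, h2, h3⟩ := hsq _ _ _ henergy
  rw [norm_eq_zero] at h1 h2 h3
  have hframe (v : Fin 3 ⊕ Fin 3) : q v = q (.inr 0) +
      (hexagonFrame v).1 • (q (.inl 0) - q (.inr 0)) +
      (hexagonFrame v).2 • (q (.inr 0) - q (.inl 1)) := by
    rcases v with v | v <;> fin_cases v <;>
      simp only [hexagonFrame, Sum.elim_inl, Sum.elim_inr, Fin.zero_eta, Fin.mk_one,
        Fin.reduceFinMk, Fin.isValue, cons_val_zero, cons_val_one, cons_val]
    · module
    · module
    · linear_combination (norm := module) (-1 : ℝ) • h1 + (-1 / 2 : ℝ) • h2 + (3 / 2 : ℝ) • h3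
    · module
    · linear_combination (norm := module) (-1 : ℝ) • h1 + h3
    · linear_combination (norm := module) (-1 : ℝ) • h1 + (-1 / 2 : ℝ) • h2 + (1 / 2 : ℝ) • h3
  rw [hframe i, hframe j]
  module

theorem universallyRigid_hexagon :
    UniversallyRigid (completeBipartiteGraph (Fin 3) (Fin 3)) hexagon := by
  intro r' _ _ q _ hq
  have hp : FrameworkEquiv (completeBipartiteGraph (Fin 3) (Fin 3)) hexagon hexagon :=
    fun _ _ _ => rfl
  have hedge {r : ℕ} {x : Fin 3 ⊕ Fin 3 → EuclideanSpace ℝ (Fin r)}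
      (hx : FrameworkEquiv (completeBipartiteGraph (Fin 3) (Fin 3)) hexagon x) :
      x (.inr 0) - x (.inl 1) - (x (.inl 0) - x (.inr 0)) = x (.inl 1) - x (.inr 1) := by
    rw [sub_eq_hexagonFrame_of_frameworkEquiv hx (.inl 1)]
    simp only [hexagonFrame, Sum.elim_inl, Sum.elim_inr, Fin.isValue, cons_val_zero, cons_val_one]
    module
  intro i j
  rw [sub_eq_hexagonFrame_of_frameworkEquiv hq, sub_eq_hexagonFrame_of_frameworkEquiv hp]
  exact norm_smul_add_smul_eq_of_norm_eq (hq _ _ (by simp)) (hq _ _ (by simp))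
    (by rw [hedge hq, hedge hp]; exact hq _ _ (by simp)) _ _

theorem doubleSignedArea_hexagon_ne_zero (x y z : Fin 3 ⊕ Fin 3) (hxy : x ≠ y) (hxz : x ≠ z)
    (hyz : y ≠ z) : doubleSignedArea (hexagon x) (hexagon y) (hexagon z) ≠ 0 := by
  rcases x with x | x <;> rcases y with y | y <;> rcases z with z | z <;>
    fin_cases x <;> fin_cases y <;> fin_cases z <;> norm_num [doubleSignedArea, hexagon] at *

/-- There is a `2`-dimensional configuration `p` of the six nodes of the complete bipartite
graph `K₃,₃`, in general position in `ℝ²`, such that the framework `(K₃,₃, p)` is universally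
rigid; in particular, since `K₃,₃` is triangle-free, there is a universally rigid
`2`-dimensional framework in general position in `ℝ²` whose graph contains no triangle. -/
theorem exists_universally_rigid_K33_framework :
    ∃ p : (Fin 3 ⊕ Fin 3) → EuclideanSpace ℝ (Fin 2),
      IsRDimensional p ∧ InGeneralPosition p ∧
      UniversallyRigid (completeBipartiteGraph (Fin 3) (Fin 3)) p ∧
      (completeBipartiteGraph (Fin 3) (Fin 3)).CliqueFree 3 := by
  have hgen : InGeneralPosition hexagon :=
    inGeneralPosition_of_doubleSignedArea_ne_zero doubleSignedArea_hexagon_ne_zero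
  refine ⟨hexagon, hgen.isRDimensional (by simp), hgen,
    universallyRigid_hexagon, ?_⟩
  exact (SimpleGraph.CompleteBipartiteGraph.bicoloring _ _).colorable.cliqueFree (by simp)
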